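/- arXiv:1104.2939 — 2 statements merged into one kernel-verified Lean document; each statement's English description precedes it below -/
import Mathlib

section
/- Consider a deterministic node-oblivious decision rule vector (f, g, h) on the k-ary tree satisfying Assumption 3 with messages μ₋, μ₊ and constant η > 0. If for some depth t > τ_d the root rule satisfies h(μ₋, μ₋, …, μ₋) ≠ 0, then P(σ_root ≠ s) ≥ η^k/2 at that depth; likewise if h(μ₊, μ₊, …, μ₊) ≠ 1 then P(σ_root ≠ s) ≥ η^k/2. Consequently, if P(σ_root ≠ s) → 0 as t → ∞, then h(μ₋, …, μ₋) = 0, h(μ₊, …, μ₊) = 1, and in particular μ₋ ≠ μ₊. -/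
/-!
Node-oblivious deterministic decision rules on the `k`-ary tree: every leaf applies the
same rule `g : X → M` to its private signal (i.i.d. with law `p₀` under `s = 0` and
`p₁` under `s = 1`, both everywhere positive on the finite set `X`), every internal
non-root node applies the same rule `f : Mᵏ → M` to its children's messages, and the
root applies `h : Mᵏ → Bool`.  The state of the world `s` is uniform on `{0,1}`.

We formalize the subexponential lower bound on the error probability under the three
irreducibility assumptions, in terms of the diameter `d` of the dependence graph.
-/

/-- `p` is an everywhere-positive probability distribution on the finite set `X`. -/
def IsPositiveDist {X : Type} [Fintype X] (p : X → ℝ) : Prop :=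
  (∀ x, 0 < p x) ∧ ∑ x, p x = 1

/-- Message distribution at a node of level `τ` (distance `τ` from the leaves) for the
node-oblivious deterministic rule vector with leaf rule `g` and internal rule `f`,
when the private signals are i.i.d. with law `p`. -/
noncomputable def oblDist {X M : Type} [Fintype X] [Fintype M] [DecidableEq M] {k : ℕ}
    (p : X → ℝ) (g : X → M) (f : (Fin k → M) → M) : ℕ → M → ℝ
  | 0, μ => ∑ x, if g x = μ then p x else 0
  | τ + 1, μ => ∑ σ : Fin k → M, if f σ = μ then ∏ i, oblDist p g f τ (σ i) else 0

/-- Root error probability `P(σ_root ≠ s)` (uniform prior on `s`) for the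
node-oblivious protocol `(f, g, h)`; the root's children are at level `t`, so the
total depth is `t + 1` and there are `n = k^(t+1)` private signals. -/
noncomputable def oblErr {X M : Type} [Fintype X] [Fintype M] [DecidableEq M] {k : ℕ}
    (p₀ p₁ : X → ℝ) (g : X → M) (f : (Fin k → M) → M) (h : (Fin k → M) → Bool)
    (t : ℕ) : ℝ :=
  (1 / 2) * (∑ σ : Fin k → M, if h σ = true then ∏ i, oblDist p₀ g f t (σ i) else 0) +
  (1 / 2) * (∑ σ : Fin k → M, if h σ = false then ∏ i, oblDist p₁ g f t (σ i) else 0)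

/-- The dependence graph of `f`: there is a directed edge from `μ` to `ν` iff there is
an input vector `α ∈ Mᵏ` in which `ν` appears at least once and `f α = μ`. -/
def DepEdge {M : Type} {k : ℕ} (f : (Fin k → M) → M) (μ ν : M) : Prop :=
  ∃ α : Fin k → M, (∃ i, α i = ν) ∧ f α = μ

/-- `HasPath f n μ ν`: the dependence graph of `f` contains a directed path with
exactly `n` edges from `μ` to `ν`. -/
def HasPath {M : Type} {k : ℕ} (f : (Fin k → M) → M) : ℕ → M → M → Prop
  | 0, μ, ν => μ = ν
  | n + 1, μ, ν => ∃ ξ, DepEdge f μ ξ ∧ HasPath f n ξ ν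

/-- `d` is the diameter of the dependence graph of `f`: every ordered pair of distinct
vertices is joined by a directed path of length at most `d`, and some ordered pair of
distinct vertices has no directed path of length less than `d`. -/
def IsDiameter {M : Type} {k : ℕ} (f : (Fin k → M) → M) (d : ℕ) : Prop :=
  (∀ μ ν : M, μ ≠ ν → ∃ n, n ≤ d ∧ HasPath f n μ ν) ∧
  (∃ μ ν : M, μ ≠ ν ∧ ∀ n, n < d → ¬HasPath f n μ ν)

lemma oblDist_nonneg {X M : Type} [Fintype X] [Fintype M] [DecidableEq M] {k : ℕ}
    (p : X → ℝ) (hp : ∀ x, 0 ≤ p x) (g : X → M) (f : (Fin k → M) → M) :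
    ∀ τ μ, 0 ≤ oblDist p g f τ μ := by
  intro τ
  induction τ with
  | zero =>
    intro μ
    simp only [oblDist]
    apply Finset.sum_nonneg
    intro x _
    split
    · exact hp x
    · exact le_refl 0
  | succ n ih =>
    intro μ
    simp only [oblDist]
    apply Finset.sum_nonneg
    intro σ _
    split
    · exact Finset.prod_nonneg fun i _ => ih (σ i)
    · exact le_refl 0

/-- **Dominant messages determine the root rule (Remark
`mus_vec_maps_to_itself`).**  Consider a deterministic node-oblivious rule vector
`(f, g, h)` satisfying Assumption 3 with messages `μ₋, μ₊` and constant `η > 0`: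
at every level `τ > τ_d`, `P(σ_i = μ₋ | s = 0) > η` and `P(σ_i = μ₊ | s = 1) > η`.
Then for every total depth `t + 1` with `t > τ_d` (the root's children being at level
`t`): if `h(μ₋, …, μ₋) ≠ 0` then `P(σ_root ≠ s) ≥ η^k / 2`, and likewise if
`h(μ₊, …, μ₊) ≠ 1` then `P(σ_root ≠ s) ≥ η^k / 2`.  Consequently, if
`P(σ_root ≠ s) → 0` as the depth tends to infinity, then `h(μ₋, …, μ₋) = 0`,
`h(μ₊, …, μ₊) = 1`, and in particular `μ₋ ≠ μ₊`. -/
theorem dominant_messages_and_root_rule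
    (X M : Type) [Fintype X] [Fintype M] [DecidableEq M] {k : ℕ}
    (p₀ p₁ : X → ℝ) (hp₀ : IsPositiveDist p₀) (hp₁ : IsPositiveDist p₁)
    (g : X → M) (f : (Fin k → M) → M) (h : (Fin k → M) → Bool)
    (μm μp : M) (η : ℝ) (hη : 0 < η) (τd : ℕ)
    (hA3 : ∀ τ, τd < τ → η < oblDist p₀ g f τ μm ∧ η < oblDist p₁ g f τ μp) :
    (∀ t : ℕ, τd < t →
      (h (fun _ => μm) ≠ false → η ^ k / 2 ≤ oblErr p₀ p₁ g f h t) ∧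
      (h (fun _ => μp) ≠ true → η ^ k / 2 ≤ oblErr p₀ p₁ g f h t)) ∧
    (Filter.Tendsto (fun t => oblErr p₀ p₁ g f h t) Filter.atTop (nhds 0) →
      h (fun _ => μm) = false ∧ h (fun _ => μp) = true ∧ μm ≠ μp) := by
  
  have h0 := oblDist_nonneg p₀ (fun x => le_of_lt (hp₀.1 x)) g f
  have h1 := oblDist_nonneg p₁ (fun x => le_of_lt (hp₁.1 x)) g f
  have key : ∀ t : ℕ, τd < t →
      (h (fun _ => μm) ≠ false → η ^ k / 2 ≤ oblErr p₀ p₁ g f h t) ∧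
      (h (fun _ => μp) ≠ true → η ^ k / 2 ≤ oblErr p₀ p₁ g f h t) := by
    intro t ht
    have hA := hA3 t ht
    have sum0 : ∀ (b : Bool) (p : X → ℝ), (∀ x, 0 ≤ p x) → ∀ σ : Fin k → M,
        (0:ℝ) ≤ if h σ = b then ∏ i, oblDist p g f t (σ i) else 0 := by
      intro b p hp σ
      split
      · exact Finset.prod_nonneg fun i _ => oblDist_nonneg p hp g f t (σ i)
      · exact le_refl 0
    constructor
    · intro hm
      have hm' : h (fun _ => μm) = true := by
        cases hb : h (fun _ => μm) <;> simp_all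
      have hterm : η ^ k ≤ ∏ i : Fin k, oblDist p₀ g f t μm := by
        calc η ^ k = ∏ _i : Fin k, η := by simp
        _ ≤ _ := Finset.prod_le_prod (fun _ _ => le_of_lt hη) (fun i _ => le_of_lt hA.1)
      have hsum : η ^ k ≤ ∑ σ : Fin k → M, if h σ = true then ∏ i, oblDist p₀ g f t (σ i) else 0 := by
        refine le_trans ?_ (Finset.single_le_sum
          (f := fun σ : Fin k → M => if h σ = true then ∏ i, oblDist p₀ g f t (σ i) else 0)
          (fun σ _ => sum0 true p₀ (fun x => le_of_lt (hp₀.1 x)) σ)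
          (Finset.mem_univ (fun _ => μm)))
        simpa [hm'] using hterm
      have hB : (0:ℝ) ≤ ∑ σ : Fin k → M, if h σ = false then ∏ i, oblDist p₁ g f t (σ i) else 0 :=
        Finset.sum_nonneg fun σ _ => sum0 false p₁ (fun x => le_of_lt (hp₁.1 x)) σ
      unfold oblErr
      nlinarith
    · intro hm
      have hm' : h (fun _ => μp) = false := by
        cases hb : h (fun _ => μp) <;> simp_all
      have hterm : η ^ k ≤ ∏ i : Fin k, oblDist p₁ g f t μp := by
        calc η ^ k = ∏ _i : Fin k, η := by simp
        _ ≤ _ := Finset.prod_le_prod (fun _ _ => le_of_lt hη) (fun i _ => le_of_lt hA.2)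
      have hsum : η ^ k ≤ ∑ σ : Fin k → M, if h σ = false then ∏ i, oblDist p₁ g f t (σ i) else 0 := by
        refine le_trans ?_ (Finset.single_le_sum
          (f := fun σ : Fin k → M => if h σ = false then ∏ i, oblDist p₁ g f t (σ i) else 0)
          (fun σ _ => sum0 false p₁ (fun x => le_of_lt (hp₁.1 x)) σ)
          (Finset.mem_univ (fun _ => μp)))
        simpa [hm'] using hterm
      have hB : (0:ℝ) ≤ ∑ σ : Fin k → M, if h σ = true then ∏ i, oblDist p₀ g f t (σ i) else 0 :=
        Finset.sum_nonneg fun σ _ => sum0 true p₀ (fun x => le_of_lt (hp₀.1 x)) σ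
      unfold oblErr
      nlinarith
  refine ⟨key, ?_⟩
  intro htend
  have hηk : 0 < η ^ k / 2 := by positivity
  have lim : ∀ (c : Prop), (¬ c → ∀ t, τd < t → η ^ k / 2 ≤ oblErr p₀ p₁ g f h t) → c := by
    intro c hc
    by_contra hnc
    have hge : (η ^ k / 2 : ℝ) ≤ 0 := by
      refine ge_of_tendsto htend ?_
      filter_upwards [Filter.eventually_ge_atTop (τd + 1)] with t ht
      exact hc hnc t (Nat.lt_of_lt_of_le (Nat.lt_succ_self τd) ht)
    linarith
  have h1' : h (fun _ => μm) = false :=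
    lim (h (fun _ => μm) = false) (fun hn t ht => (key t ht).1 hn)
  have h2' : h (fun _ => μp) = true :=
    lim (h (fun _ => μp) = true) (fun hn t ht => (key t ht).2 hn)
  refine ⟨h1', h2', ?_⟩
  intro he
  rw [he] at h1'
  rw [h1'] at h2'
  exact Bool.false_ne_true h2'
end

section
/- Let the message alphabet be binary, M = {0,1}, and consider any deterministic node-oblivious decision rule vector (f, g, h) on the k-ary tree whose error probability P(σ_root ≠ s) tends to 0 as the depth t → ∞. Then all three irreducibility assumptions must hold: (i) the dependence graph of f is strongly connected; (ii) there exists a level τ₀ > 0 such that for a node i at level τ₀, P(σ_i = μ | s = 0) > 0 for both μ ∈ {0,1}; and (iii) there exist messages μ₋, μ₊ ∈ {0,1} and a level τ_d such that for every node i at any level τ > τ_d, P(σ_i = μ₋ | s = 0) > 1/2 and P(σ_i = μ₊ | s = 1) > 1/2. -/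
/-!
The overlap `∑ μ, min (P₀(σ = μ)) (P₁(σ = μ))` of the two message laws at one level is at
least the `k`-th power of the overlap one level below, and the root errs with probability at
least half the `k`-th power of the overlap at its children. Vanishing error therefore forces
`k ≥ 2` (else the overlap never shrinks) and eventually an overlap below `1/2`: some message `μ`
has probability `> 1/2` under `H₀` while `!μ` has probability `> 1/2` under `H₁`. The message
`μ` cannot change from one level to another, because on the all-`μ` input the root would then
err with probability at least `(1/2)^(k+1)` at one of the two levels. This is (iii); it rules
out constant `g` and `f`, which makes every message probability positive and gives (ii). Each
message thus persists with probability `> 1/2` under one hypothesis, which forces an edge out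
of it, giving (i).
-/

open Filter Topology Function

section Overlap

variable {α β : Type*} [Fintype α] [DecidableEq β]

def pushforward (w : α → β) (a : α → ℝ) (b : β) : ℝ :=
  ∑ x, if w x = b then a x else 0

/-- For probability vectors, `overlap a b = 1 - ‖a - b‖_TV`. -/
def overlap (a b : α → ℝ) : ℝ :=
  ∑ x, min (a x) (b x)

lemma pushforward_nonneg {a : α → ℝ} (ha : 0 ≤ a) (w : α → β) (b : β) :
    0 ≤ pushforward w a b :=
  Finset.sum_nonneg fun x _ => by split_ifs; exacts [ha x, le_rfl]

lemma le_pushforward {a : α → ℝ} (ha : 0 ≤ a) (w : α → β) (x : α) :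
    a x ≤ pushforward w a (w x) := by
  simpa [pushforward] using Finset.single_le_sum (f := fun y => if w y = w x then a y else 0)
    (fun y _ => by split_ifs; exacts [ha y, le_rfl]) (Finset.mem_univ x)

lemma sum_pushforward [Fintype β] (w : α → β) (a : α → ℝ) :
    ∑ b, pushforward w a b = ∑ x, a x := by
  simp only [pushforward]
  rw [Finset.sum_comm]
  simp

lemma overlap_nonneg {a b : α → ℝ} (ha : 0 ≤ a) (hb : 0 ≤ b) : 0 ≤ overlap a b :=
  Finset.sum_nonneg fun x _ => le_min (ha x) (hb x)

lemma overlap_le_sum_left (a b : α → ℝ) : overlap a b ≤ ∑ x, a x :=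
  Finset.sum_le_sum fun _ _ => min_le_left _ _

lemma overlap_le_overlap_pushforward [Fintype β] (w : α → β) (a b : α → ℝ) :
    overlap a b ≤ overlap (pushforward w a) (pushforward w b) := by
  calc overlap a b = ∑ y, pushforward w (fun x => min (a x) (b x)) y :=
        (sum_pushforward w _).symm
    _ ≤ _ := Finset.sum_le_sum fun y _ => le_min
        (Finset.sum_le_sum fun x _ => by split_ifs <;> simp)
        (Finset.sum_le_sum fun x _ => by split_ifs <;> simp)

lemma overlap_pow_le_overlap_pi {a b : α → ℝ} (ha : 0 ≤ a) (hb : 0 ≤ b) (k : ℕ) :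
    overlap a b ^ k ≤
      overlap (fun σ : Fin k → α => ∏ i, a (σ i)) (fun σ => ∏ i, b (σ i)) := by
  rw [overlap, Fintype.sum_pow]
  exact Finset.sum_le_sum fun σ _ => le_min
    (Finset.prod_le_prod (fun i _ => le_min (ha _) (hb _)) fun i _ => min_le_left _ _)
    (Finset.prod_le_prod (fun i _ => le_min (ha _) (hb _)) fun i _ => min_le_right _ _)

end Overlap

lemma Bool.exists_half_lt_of_overlap_lt_half {a b : Bool → ℝ} (ha₀ : ∀ μ, 0 ≤ a μ)
    (hb₀ : ∀ μ, 0 ≤ b μ) (ha : ∑ μ, a μ = 1) (hb : ∑ μ, b μ = 1) (hab : overlap a b < 1 / 2) :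
    ∃ μ, 1 / 2 < a μ ∧ 1 / 2 < b (!μ) := by
  rw [Fintype.sum_bool] at ha hb
  rw [overlap, Fintype.sum_bool] at hab
  rcases le_total (a true) (b true) with h | h
  · rw [min_eq_left h, min_eq_right (by linarith)] at hab
    exact ⟨false, by linarith [hb₀ false], show 1 / 2 < b true by linarith [ha₀ true]⟩
  · rw [min_eq_right h, min_eq_left (by linarith)] at hab
    exact ⟨true, by linarith [hb₀ true], show 1 / 2 < b false by linarith [ha₀ false]⟩

lemma Bool.overlap_le_add (a b : Bool → ℝ) : overlap a b ≤ a true + b false := by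
  rw [overlap, Fintype.sum_bool]
  exact add_le_add (min_le_left _ _) (min_le_right _ _)

lemma Bool.exists_eq_const_of_not_surjective {α : Type*} {w : α → Bool} (hw : ¬Surjective w) :
    ∃ c, ∀ x, w x = c := by
  simp only [Surjective, not_forall, not_exists] at hw
  obtain ⟨b, hb⟩ := hw
  exact ⟨!b, fun x => Bool.eq_not_of_ne (hb x)⟩

lemma IsPositiveDist.nonneg {X : Type} [Fintype X] {p : X → ℝ} (hp : IsPositiveDist p) :
    0 ≤ p :=
  fun x => (hp.1 x).le

section Protocol

variable {X M : Type} [Fintype X] [Fintype M] [DecidableEq M] {k : ℕ}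
  {p p' p₀ p₁ : X → ℝ} {g : X → M} {f : (Fin k → M) → M}

lemma oblDist_zero : oblDist p g f 0 = pushforward g p := rfl

lemma oblDist_succ (τ : ℕ) :
    oblDist p g f (τ + 1) = pushforward f fun σ => ∏ i, oblDist p g f τ (σ i) := rfl

lemma oblErr_eq (h : (Fin k → M) → Bool) (t : ℕ) :
    oblErr p₀ p₁ g f h t =
      1 / 2 * pushforward h (fun σ => ∏ i, oblDist p₀ g f t (σ i)) true +
      1 / 2 * pushforward h (fun σ => ∏ i, oblDist p₁ g f t (σ i)) false := rfl

lemma oblDist_nonneg_s12 (hp : 0 ≤ p) : ∀ τ, 0 ≤ oblDist p g f τ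
  | 0 => pushforward_nonneg hp g
  | τ + 1 => pushforward_nonneg (fun _ => Finset.prod_nonneg fun _ _ => oblDist_nonneg_s12 hp τ _) f

lemma prod_oblDist_nonneg (hp : 0 ≤ p) (τ : ℕ) :
    0 ≤ fun σ : Fin k → M => ∏ i, oblDist p g f τ (σ i) :=
  fun _ => Finset.prod_nonneg fun _ _ => oblDist_nonneg_s12 hp τ _

lemma sum_oblDist (hp : ∑ x, p x = 1) : ∀ τ, ∑ μ, oblDist p g f τ μ = 1
  | 0 => by rw [oblDist_zero, sum_pushforward, hp]
  | τ + 1 => by rw [oblDist_succ, sum_pushforward, ← Fintype.sum_pow, sum_oblDist hp τ, one_pow]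

lemma oblDist_pos (hp : IsPositiveDist p) (hg : Surjective g) (hf : Surjective f) :
    ∀ τ μ, 0 < oblDist p g f τ μ
  | 0, μ => by
    obtain ⟨x, rfl⟩ := hg μ
    exact (hp.1 x).trans_le (le_pushforward hp.nonneg g x)
  | τ + 1, μ => by
    obtain ⟨α, rfl⟩ := hf μ
    exact (Finset.prod_pos fun i _ => oblDist_pos hp hg hf τ _).trans_le
      (le_pushforward (prod_oblDist_nonneg hp.nonneg τ) f α)

lemma oblDist_eq_of_leaf_const {c : M} (hg : ∀ x, g x = c) (hp : ∑ x, p x = 1)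
    (hp' : ∑ x, p' x = 1) : ∀ τ, oblDist p g f τ = oblDist p' g f τ
  | 0 => by
    funext μ
    by_cases hc : c = μ <;> simp [oblDist_zero, pushforward, hg, hc, hp, hp']
  | τ + 1 => by rw [oblDist_succ, oblDist_succ, oblDist_eq_of_leaf_const hg hp hp' τ]

lemma oblDist_succ_of_const {c : M} (hf : ∀ α, f α = c) (hp : ∑ x, p x = 1) (τ : ℕ) :
    oblDist p g f (τ + 1) = fun μ => if c = μ then 1 else 0 := by
  funext μ
  by_cases hc : c = μ
  · simp [oblDist_succ, pushforward, hf, hc, ← Fintype.sum_pow, sum_oblDist hp τ]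
  · simp [oblDist_succ, pushforward, hf, hc]

lemma overlap_oblDist_pow_le_succ (hp₀ : 0 ≤ p₀) (hp₁ : 0 ≤ p₁) (τ : ℕ) :
    overlap (oblDist p₀ g f τ) (oblDist p₁ g f τ) ^ k ≤
      overlap (oblDist p₀ g f (τ + 1)) (oblDist p₁ g f (τ + 1)) :=
  (overlap_pow_le_overlap_pi (oblDist_nonneg_s12 hp₀ τ) (oblDist_nonneg_s12 hp₁ τ) k).trans
    (overlap_le_overlap_pushforward f _ _)

lemma overlap_oblDist_zero_pow_le (hp₀ : 0 ≤ p₀) (hp₁ : 0 ≤ p₁) :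
    ∀ τ, overlap (oblDist p₀ g f 0) (oblDist p₁ g f 0) ^ k ^ τ ≤
      overlap (oblDist p₀ g f τ) (oblDist p₁ g f τ)
  | 0 => by rw [pow_zero, pow_one]
  | τ + 1 => by
    rw [pow_succ, pow_mul]
    exact (pow_le_pow_left₀ (pow_nonneg (overlap_nonneg (oblDist_nonneg_s12 hp₀ 0)
      (oblDist_nonneg_s12 hp₁ 0)) _) (overlap_oblDist_zero_pow_le hp₀ hp₁ τ) k).trans
      (overlap_oblDist_pow_le_succ hp₀ hp₁ τ)

lemma overlap_oblDist_zero_pos (hp₀ : IsPositiveDist p₀) (hp₁ : IsPositiveDist p₁) :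
    0 < overlap (oblDist p₀ g f 0) (oblDist p₁ g f 0) := by
  obtain ⟨x⟩ : Nonempty X := by
    by_contra hX
    simpa [not_nonempty_iff.1 hX] using hp₀.2
  have hpos : 0 < overlap p₀ p₁ :=
    Finset.sum_pos (fun x _ => lt_min (hp₀.1 x) (hp₁.1 x)) ⟨x, Finset.mem_univ x⟩
  exact hpos.trans_le (overlap_le_overlap_pushforward g p₀ p₁)

lemma half_overlap_pow_le_oblErr (hp₀ : 0 ≤ p₀) (hp₁ : 0 ≤ p₁) (h : (Fin k → M) → Bool)
    (t : ℕ) :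
    1 / 2 * overlap (oblDist p₀ g f t) (oblDist p₁ g f t) ^ k ≤
      oblErr p₀ p₁ g f h t := by
  set A := pushforward h fun σ => ∏ i, oblDist p₀ g f t (σ i)
  set B := pushforward h fun σ => ∏ i, oblDist p₁ g f t (σ i)
  have hle : overlap (oblDist p₀ g f t) (oblDist p₁ g f t) ^ k ≤ A true + B false :=
    (overlap_pow_le_overlap_pi (oblDist_nonneg_s12 hp₀ t) (oblDist_nonneg_s12 hp₁ t) k).trans <|
      (overlap_le_overlap_pushforward h _ _).trans (Bool.overlap_le_add A B)
  rw [oblErr_eq]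
  linarith

lemma half_pow_le_oblErr_or (hp₀ : 0 ≤ p₀) (hp₁ : 0 ≤ p₁) (h : (Fin k → M) → Bool) (μ : M)
    (t t' : ℕ) :
    1 / 2 * oblDist p₀ g f t μ ^ k ≤ oblErr p₀ p₁ g f h t ∨
      1 / 2 * oblDist p₁ g f t' μ ^ k ≤ oblErr p₀ p₁ g f h t' := by
  cases hμ : h (fun _ => μ)
  · have hle := le_pushforward (prod_oblDist_nonneg (g := g) (f := f) hp₁ t') h (fun _ => μ)
    have hA := pushforward_nonneg (prod_oblDist_nonneg (g := g) (f := f) hp₀ t') h true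
    rw [hμ, Finset.prod_const, Finset.card_univ, Fintype.card_fin] at hle
    right
    rw [oblErr_eq]
    linarith
  · have hle := le_pushforward (prod_oblDist_nonneg (g := g) (f := f) hp₀ t) h (fun _ => μ)
    have hB := pushforward_nonneg (prod_oblDist_nonneg (g := g) (f := f) hp₁ t) h false
    rw [hμ, Finset.prod_const, Finset.card_univ, Fintype.card_fin] at hle
    left
    rw [oblErr_eq]
    linarith

lemma two_le_of_tendsto_oblErr (hp₀ : IsPositiveDist p₀) (hp₁ : IsPositiveDist p₁)
    {h : (Fin k → M) → Bool} (hconv : Tendsto (fun t => oblErr p₀ p₁ g f h t) atTop (𝓝 0)) :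
    2 ≤ k := by
  by_contra! hk
  set m := overlap (oblDist p₀ g f 0) (oblDist p₁ g f 0)
  have hm : 0 < m := overlap_oblDist_zero_pos hp₀ hp₁
  have hm1 : m ≤ 1 := (overlap_le_sum_left _ _).trans_eq (sum_oblDist hp₀.2 0)
  have hbound : ∀ t, 1 / 2 * m ≤ oblErr p₀ p₁ g f h t := fun t => calc
    1 / 2 * m = 1 / 2 * m ^ 1 := by rw [pow_one]
    _ ≤ 1 / 2 * m ^ k ^ (t + 1) := mul_le_mul_of_nonneg_left
        (pow_le_pow_of_le_one hm.le hm1 (pow_le_one₀ (Nat.zero_le k) (by omega))) (by norm_num)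
    _ = 1 / 2 * (m ^ k ^ t) ^ k := by rw [pow_succ, pow_mul]
    _ ≤ 1 / 2 * overlap (oblDist p₀ g f t) (oblDist p₁ g f t) ^ k := by
        gcongr
        exact overlap_oblDist_zero_pow_le hp₀.nonneg hp₁.nonneg t
    _ ≤ oblErr p₀ p₁ g f h t := half_overlap_pow_le_oblErr hp₀.nonneg hp₁.nonneg h t
  have hm2 : 0 < 1 / 2 * m := by positivity
  obtain ⟨t, ht⟩ := (hconv.eventually (gt_mem_nhds hm2)).exists
  exact (hbound t).not_gt ht

lemma oblDist_succ_eq_pow {ν : M} (hν : ∀ α, f α = ν ↔ α = fun _ => ν) (τ : ℕ) :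
    oblDist p g f (τ + 1) ν = oblDist p g f τ ν ^ k := by
  simp [oblDist_succ, pushforward, hν]

lemma oblDist_add_eq_pow {ν : M} (hν : ∀ α, f α = ν ↔ α = fun _ => ν) (τ : ℕ) :
    ∀ n, oblDist p g f (τ + n) ν = oblDist p g f τ ν ^ k ^ n
  | 0 => by rw [add_zero, pow_zero, pow_one]
  | n + 1 => by
    rw [← add_assoc, oblDist_succ_eq_pow hν, oblDist_add_eq_pow hν τ n, pow_succ, pow_mul]

/-- Without an edge leaving `ν`, a node sends `ν` only if all its children do, so
`P(σ = ν)` is raised to the `k`-th power at every level and cannot stay bounded away from `0`. -/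
lemma exists_depEdge_ne_of_persistent [Nontrivial M] (hk : 2 ≤ k) (hp : IsPositiveDist p)
    (hg : Surjective g) (hf : Surjective f) {ν : M} {T : ℕ} {c : ℝ} (hc : 0 < c)
    (hpers : ∀ t, T ≤ t → c < oblDist p g f t ν) : ∃ ξ, ξ ≠ ν ∧ DepEdge f ν ξ := by
  by_contra! hno
  have hfiber : ∀ α, f α = ν → α = fun _ => ν := fun α hα => funext fun i => by
    by_contra hi
    exact hno (α i) hi ⟨α, ⟨i, rfl⟩, hα⟩
  have hν : ∀ α, f α = ν ↔ α = fun _ => ν := by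
    obtain ⟨α₀, hα₀⟩ := hf ν
    exact fun α => ⟨hfiber α, fun hα => hα ▸ hfiber α₀ hα₀ ▸ hα₀⟩
  have hlt : oblDist p g f T ν < 1 := by
    obtain ⟨ξ, hξ⟩ := exists_ne ν
    rw [← sum_oblDist (g := g) (f := f) hp.2 T]
    exact Finset.single_lt_sum hξ (Finset.mem_univ _) (Finset.mem_univ _)
      (oblDist_pos hp hg hf T ξ) fun _ _ _ => oblDist_nonneg_s12 hp.nonneg T _
  have hdecay : Tendsto (fun n => oblDist p g f (T + n) ν) atTop (𝓝 0) := by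
    simp_rw [oblDist_add_eq_pow hν]
    exact (tendsto_pow_atTop_nhds_zero_of_lt_one (oblDist_nonneg_s12 hp.nonneg T ν) hlt).comp
      (tendsto_pow_atTop_atTop_of_one_lt hk)
  obtain ⟨n, hn⟩ := (hdecay.eventually (gt_mem_nhds hc)).exists
  exact (hpers (T + n) (Nat.le_add_right T n)).not_gt hn

end Protocol

section Binary

variable {X : Type} [Fintype X] {k : ℕ} {p₀ p₁ : X → ℝ} {g : X → Bool}
  {f : (Fin k → Bool) → Bool}

lemma surjective_of_oblDist_ne (hp₀ : ∑ x, p₀ x = 1) (hp₁ : ∑ x, p₁ x = 1) {τ : ℕ}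
    (hne : oblDist p₀ g f (τ + 1) ≠ oblDist p₁ g f (τ + 1)) :
    Surjective g ∧ Surjective f := by
  constructor
  · by_contra hg
    obtain ⟨c, hc⟩ := Bool.exists_eq_const_of_not_surjective hg
    exact hne (oblDist_eq_of_leaf_const hc hp₀ hp₁ _)
  · by_contra hf
    obtain ⟨c, hc⟩ := Bool.exists_eq_const_of_not_surjective hf
    exact hne (by rw [oblDist_succ_of_const hc hp₀, oblDist_succ_of_const hc hp₁])

lemma exists_decisive_of_tendsto_oblErr (hp₀ : IsPositiveDist p₀) (hp₁ : IsPositiveDist p₁)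
    {h : (Fin k → Bool) → Bool}
    (hconv : Tendsto (fun t => oblErr p₀ p₁ g f h t) atTop (𝓝 0)) :
    ∃ μ T, ∀ t, T ≤ t → 1 / 2 < oblDist p₀ g f t μ ∧ 1 / 2 < oblDist p₁ g f t (!μ) := by
  have hε : (0 : ℝ) < 1 / 2 * (1 / 2) ^ k := by positivity
  obtain ⟨T, hT⟩ := eventually_atTop.1 (hconv.eventually (gt_mem_nhds hε))
  have hdec : ∀ t, T ≤ t →
      ∃ μ, 1 / 2 < oblDist p₀ g f t μ ∧ 1 / 2 < oblDist p₁ g f t (!μ) := by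
    intro t ht
    refine Bool.exists_half_lt_of_overlap_lt_half (oblDist_nonneg_s12 hp₀.nonneg t)
      (oblDist_nonneg_s12 hp₁.nonneg t) (sum_oblDist hp₀.2 t) (sum_oblDist hp₁.2 t) ?_
    refine lt_of_pow_lt_pow_left₀ k (by norm_num) ?_
    linarith [half_overlap_pow_le_oblErr (g := g) (f := f) hp₀.nonneg hp₁.nonneg h t,
      hT t ht]
  obtain ⟨μ, hμ, -⟩ := hdec T le_rfl
  refine ⟨μ, T, fun t ht => ?_⟩
  obtain ⟨ν, hν⟩ := hdec t ht
  suffices ν = μ from this ▸ hν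
  by_contra hne
  have hνμ : (!ν) = μ := by simp [Bool.eq_not_of_ne hne]
  rw [hνμ] at hν
  rcases half_pow_le_oblErr_or (g := g) (f := f) hp₀.nonneg hp₁.nonneg h μ T t with
    hle | hle
  · linarith [pow_le_pow_left₀ (by norm_num) hμ.le k, hT T le_rfl]
  · linarith [pow_le_pow_left₀ (by norm_num) hν.2.le k, hT t ht]

end Binary

/-- **Necessity of the irreducibility assumptions for binary messages.**  Let the
message alphabet be binary (`M = Bool`), and consider any deterministic node-oblivious
rule vector `(f, g, h)` on the `k`-ary tree whose error probability tends to `0` as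
the depth tends to infinity.  Then all three irreducibility assumptions must hold:
(i) the dependence graph of `f` is strongly connected;
(ii) there is a level `τ₀ > 0` at which both messages have positive probability
under `H₀`;
(iii) there are messages `μ₋, μ₊` and a level `τ_d` such that at every level
`τ > τ_d`, `P(σ_i = μ₋ | s = 0) > 1/2` and `P(σ_i = μ₊ | s = 1) > 1/2`
(i.e. Assumption 3 holds with `η = 1/2`). -/
theorem binary_node_oblivious_assumptions_necessary
    (X : Type) [Fintype X] (k : ℕ)
    (p₀ p₁ : X → ℝ) (hp₀ : IsPositiveDist p₀) (hp₁ : IsPositiveDist p₁)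
    (g : X → Bool) (f : (Fin k → Bool) → Bool) (h : (Fin k → Bool) → Bool)
    (hconv : Filter.Tendsto (fun t => oblErr p₀ p₁ g f h t) Filter.atTop (nhds 0)) :
    (∀ μ ν : Bool, μ ≠ ν → ∃ n, 1 ≤ n ∧ HasPath f n μ ν) ∧
    (∃ τ₀ : ℕ, 0 < τ₀ ∧ ∀ μ : Bool, 0 < oblDist p₀ g f τ₀ μ) ∧
    (∃ (μm μp : Bool) (τd : ℕ), ∀ τ, τd < τ →
      1 / 2 < oblDist p₀ g f τ μm ∧ 1 / 2 < oblDist p₁ g f τ μp) := by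
  have hk := two_le_of_tendsto_oblErr hp₀ hp₁ hconv
  obtain ⟨μ, T, hT⟩ := exists_decisive_of_tendsto_oblErr hp₀ hp₁ hconv
  have hsep : oblDist p₀ g f (T + 1) ≠ oblDist p₁ g f (T + 1) := fun heq => by
    obtain ⟨h₀, h₁⟩ := hT (T + 1) (Nat.le_succ T)
    have hsum := sum_oblDist (g := g) (f := f) hp₁.2 (T + 1)
    rw [heq] at h₀
    cases μ <;> simp only [Fintype.sum_bool, Bool.not_false, Bool.not_true] at hsum h₁ <;>
      linarith
  obtain ⟨hg, hf⟩ := surjective_of_oblDist_ne hp₀.2 hp₁.2 hsep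
  refine ⟨fun ν ν' hνν' => ?_, ⟨1, one_pos, oblDist_pos hp₀ hg hf 1⟩,
    μ, !μ, T, fun τ hτ => hT τ hτ.le⟩
  obtain ⟨ξ, hξ, hedge⟩ : ∃ ξ, ξ ≠ ν ∧ DepEdge f ν ξ := by
    by_cases hνμ : ν = μ
    · subst hνμ
      exact exists_depEdge_ne_of_persistent hk hp₀ hg hf one_half_pos fun t ht => (hT t ht).1
    · rw [Bool.eq_not_of_ne hνμ]
      exact exists_depEdge_ne_of_persistent hk hp₁ hg hf one_half_pos fun t ht => (hT t ht).2
  exact ⟨1, le_rfl, ξ, hedge,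
    (Bool.eq_not_of_ne hξ).trans (Bool.eq_not_of_ne hνν'.symm).symm⟩
end
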